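/- arXiv:1004.1958 — 2 statements merged into one kernel-verified Lean document; each statement's English description precedes it below -/
import Mathlib

section
/- There exists a constant C > 0 such that for all x, y ∈ ℤ, the expected number of visits of the walk to y strictly before hitting 0 satisfies 𝔼_x(#{n : n < H_0^Y and Y_n = y}) ≤ C·|y|. -/
/-!
Let `g` be the expected number of visits to `y` before time `N` of the walk killed on
`A = {0} ∪ {|z| ≥ M}`. It vanishes on `A`, satisfies `g ≤ δ_y + P g`, and by the maximum
principle it is largest at `y`. Since `P` is doubly substochastic on the finite set `(-M, M)`, the
Dirichlet energy `∑ π (b - a) (g a - g b)²` is at most `2 ∑ g (g - P g) ≤ 2 g y`. Along the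
nearest-neighbour path from `0` to `y`, Cauchy–Schwarz gives `g y ² ≤ |y| · (path energy)`, and
the path energy is at most the Dirichlet energy divided by `min (π 1) (π (-1))`. Hence
`g y ≤ 2 |y| / min (π 1) (π (-1))` uniformly in `N` and `M`, and monotone convergence
in both concludes.
-/

open MeasureTheory
open scoped Classical ENNReal

/-- A probability mass function on `ℤ`, encoded as a nonnegative real-valued
function summing to `1`. -/
def IsPMF (p : ℤ → ℝ) : Prop := (∀ x, 0 ≤ p x) ∧ HasSum p 1

/-- The hitting time of a set `A ⊆ ℤ` by a trajectory `ω : ℕ → ℤ`, with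
value `⊤` if the set is never visited. -/
noncomputable def hitTime (A : Set ℤ) (ω : ℕ → ℤ) : ℕ∞ :=
  ⨅ (n : ℕ) (_ : ω n ∈ A), (n : ℕ∞)

open Finset

variable {π : ℤ → ℝ} {Q : ℤ → Measure (ℕ → ℤ)}

theorem sum_sum_mul_sub_sq_le {ι : Type*} (T : Finset ι) (K : ι → ι → ℝ) (g : ι → ℝ)
    (hrow : ∀ a ∈ T, ∑ b ∈ T, K a b ≤ 1) (hcol : ∀ b ∈ T, ∑ a ∈ T, K a b ≤ 1) :
    ∑ a ∈ T, ∑ b ∈ T, K a b * (g a - g b) ^ 2 ≤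
      2 * ∑ a ∈ T, g a * (g a - ∑ b ∈ T, K a b * g b) := by
  have hexpand : ∑ a ∈ T, ∑ b ∈ T, K a b * (g a - g b) ^ 2
      = ∑ a ∈ T, g a ^ 2 * ∑ b ∈ T, K a b + ∑ b ∈ T, g b ^ 2 * ∑ a ∈ T, K a b
          - 2 * ∑ a ∈ T, g a * ∑ b ∈ T, K a b * g b := by
    simp only [mul_sum]
    rw [sum_comm (s := T) (t := T) (f := fun b a => g b ^ 2 * K a b), ← sum_add_distrib,
      ← sum_sub_distrib]
    refine sum_congr rfl fun a _ => ?_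
    rw [← sum_add_distrib, ← sum_sub_distrib]
    exact sum_congr rfl fun b _ => by ring
  have hrow' : ∑ a ∈ T, g a ^ 2 * ∑ b ∈ T, K a b ≤ ∑ a ∈ T, g a ^ 2 :=
    sum_le_sum fun a ha => mul_le_of_le_one_right (sq_nonneg _) (hrow a ha)
  have hcol' : ∑ b ∈ T, g b ^ 2 * ∑ a ∈ T, K a b ≤ ∑ b ∈ T, g b ^ 2 :=
    sum_le_sum fun b hb => mul_le_of_le_one_right (sq_nonneg _) (hcol b hb)
  have hsplit : ∑ a ∈ T, g a * (g a - ∑ b ∈ T, K a b * g b)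
      = ∑ a ∈ T, g a ^ 2 - ∑ a ∈ T, g a * ∑ b ∈ T, K a b * g b := by
    rw [← sum_sub_distrib]; exact sum_congr rfl fun a _ => by ring
  rw [hexpand, hsplit]
  linarith

theorem sq_sub_le_mul_sum_sq (f : ℕ → ℝ) (m : ℕ) :
    (f m - f 0) ^ 2 ≤ m * ∑ k ∈ range m, (f (k + 1) - f k) ^ 2 := by
  simpa [← sum_range_sub] using
    sq_sum_le_card_mul_sum_sq (s := range m) (f := fun k => f (k + 1) - f k)

theorem sum_range_mul_sub_sq_le {ι : Type*} (T : Finset ι) (K : ι → ι → ℝ)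
    (hK : ∀ a b, 0 ≤ K a b) (g : ι → ℝ) (c : ℕ → ι) (hc : Function.Injective c) (m : ℕ)
    (hcT : ∀ k ≤ m, c k ∈ T) :
    ∑ k ∈ range m, K (c k) (c (k + 1)) * (g (c k) - g (c (k + 1))) ^ 2 ≤
      ∑ a ∈ T, ∑ b ∈ T, K a b * (g a - g b) ^ 2 := by
  rw [← sum_product' (f := fun a b => K a b * (g a - g b) ^ 2)]
  have hinj : Set.InjOn (fun k => (c k, c (k + 1))) (range m) :=
    fun k _ j _ h => hc (Prod.ext_iff.mp h).1
  rw [← sum_image (f := fun q : ι × ι => K q.1 q.2 * (g q.1 - g q.2) ^ 2) hinj]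
  refine sum_le_sum_of_subset_of_nonneg ?_ fun q _ _ => mul_nonneg (hK _ _) (sq_nonneg _)
  intro q hq
  obtain ⟨k, hk, rfl⟩ := mem_image.mp hq
  have := mem_range.mp hk
  exact mem_product.mpr ⟨hcT k this.le, hcT (k + 1) this⟩

theorem IsPMF.sum_comp_le_one (hπ : IsPMF π) {ι : Type*} {e : ι → ℤ}
    (he : Function.Injective e) (s : Finset ι) : ∑ i ∈ s, π (e i) ≤ 1 := by
  calc ∑ i ∈ s, π (e i) = ∑ z ∈ s.map ⟨e, he⟩, π z := (sum_map s ⟨e, he⟩ π).symm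
    _ ≤ ∑' z, π z := hπ.2.summable.sum_le_tsum _ fun z _ => hπ.1 z
    _ = 1 := hπ.2.tsum_eq

theorem le_of_poisson_subsolution (hπ : IsPMF π) {T : Finset ℤ} {g : ℤ → ℝ} {y : ℤ}
    (hy : y ≠ 0) (hg : ∀ z, 0 ≤ g z) (hg0 : g 0 = 0)
    (hchain : ∀ k ≤ y.natAbs, y.sign * k ∈ T)
    (hsub : ∀ z ∈ T, g z ≤ (if z = y then 1 else 0) + ∑ w ∈ T, π (w - z) * g w) :
    min (π 1) (π (-1)) * g y ≤ 2 * |(y : ℝ)| := by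
  set m := y.natAbs
  set s := y.sign
  set c : ℕ → ℤ := fun k => s * k
  have hs : s ≠ 0 := fun h => hy (Int.sign_eq_zero_iff_zero.mp h)
  have hc : Function.Injective c := fun k j h => by
    simpa using mul_left_cancel₀ hs h
  have hcm : c m = y := Int.sign_mul_natAbs y
  have hyT : y ∈ T := hcm ▸ hchain m le_rfl
  have hflux : ∑ a ∈ T, g a * (g a - ∑ b ∈ T, π (b - a) * g b) ≤ g y := by
    calc ∑ a ∈ T, g a * (g a - ∑ b ∈ T, π (b - a) * g b)
        ≤ ∑ a ∈ T, g a * (if a = y then 1 else 0) :=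
          sum_le_sum fun a ha => mul_le_mul_of_nonneg_left (by linarith [hsub a ha]) (hg a)
      _ = g y := by simp [hyT]
  have henergy := sum_sum_mul_sub_sq_le T (fun a b => π (b - a)) g
    (fun a _ => hπ.sum_comp_le_one (sub_left_injective (b := a)) T)
    (fun b _ => hπ.sum_comp_le_one (sub_right_injective (b := b)) T)
  have hpath :=
    sum_range_mul_sub_sq_le T (fun a b => π (b - a)) (fun _ _ => hπ.1 _) g c hc m hchain
  have hstep : ∀ k : ℕ, c (k + 1) - c k = s := fun k => by simp [c]; ring
  simp only [hstep, ← mul_sum] at hpath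
  have hcs := sq_sub_le_mul_sum_sq (fun k => g (c k)) m
  simp only [hcm, show c 0 = 0 by simp [c], hg0, sub_zero] at hcs
  have hsum : ∑ k ∈ range m, (g (c k) - g (c (k + 1))) ^ 2
      = ∑ k ∈ range m, (g (c (k + 1)) - g (c k)) ^ 2 :=
    sum_congr rfl fun k _ => by ring
  rw [hsum] at hpath
  have hπs : 0 ≤ π s := hπ.1 s
  have hquad : π s * g y * g y ≤ 2 * m * g y := by
    calc π s * g y * g y = π s * g y ^ 2 := by ring
      _ ≤ π s * (m * ∑ k ∈ range m, (g (c (k + 1)) - g (c k)) ^ 2) :=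
          mul_le_mul_of_nonneg_left hcs hπs
      _ = m * (π s * ∑ k ∈ range m, (g (c (k + 1)) - g (c k)) ^ 2) := by ring
      _ ≤ m * (2 * g y) := mul_le_mul_of_nonneg_left (by linarith) m.cast_nonneg
      _ = 2 * m * g y := by ring
  have hmin : min (π 1) (π (-1)) ≤ π s := by
    rcases hy.lt_or_gt with hneg | hpos
    · simp [s, Int.sign_eq_neg_one_of_neg hneg]
    · simp [s, Int.sign_eq_one_of_pos hpos]
  have hm : (m : ℝ) = |(y : ℝ)| := by simp [m, Nat.cast_natAbs]
  rcases (hg y).eq_or_lt with hgy | hgy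
  · rw [← hgy, mul_zero]; positivity
  · calc min (π 1) (π (-1)) * g y ≤ π s * g y := mul_le_mul_of_nonneg_right hmin hgy.le
      _ ≤ 2 * m := le_of_mul_le_mul_right hquad hgy
      _ = 2 * |(y : ℝ)| := by rw [hm]

def IsWalkLaw (π : ℤ → ℝ) (Q : ℤ → Measure (ℕ → ℤ)) : Prop :=
  ∀ (x : ℤ) (n : ℕ) (a : ℕ → ℤ), Q x {ω | ∀ i ≤ n, ω i = a i} =
    if a 0 = x then ENNReal.ofReal (∏ i ∈ range n, π (a (i + 1) - a i)) else 0

def pathPrefix (n : ℕ) (ω : ℕ → ℤ) : Fin (n + 1) → ℤ := fun i => ω i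

theorem measurable_pathPrefix (n : ℕ) : Measurable (pathPrefix n) :=
  measurable_pi_lambda _ fun i => measurable_pi_apply (i : ℕ)

noncomputable def pathWeight (π : ℤ → ℝ) {n : ℕ} (v : Fin (n + 1) → ℤ) : ℝ≥0∞ :=
  ∏ i : Fin n, ENNReal.ofReal (π (v i.succ - v i.castSucc))

theorem pathWeight_cons (π : ℤ → ℝ) (z : ℤ) {n : ℕ} (u : Fin (n + 1) → ℤ) :
    pathWeight π (Fin.cons z u : Fin (n + 2) → ℤ) =
      ENNReal.ofReal (π (u 0 - z)) * pathWeight π u := by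
  simp [pathWeight, Fin.prod_univ_succ]

theorem IsWalkLaw.measure_pathPrefix_eq (hQ : IsWalkLaw π Q) (hπ : ∀ z, 0 ≤ π z) (x : ℤ)
    {n : ℕ} (v : Fin (n + 1) → ℤ) :
    Q x (pathPrefix n ⁻¹' {v}) = if v 0 = x then pathWeight π v else 0 := by
  have hset : pathPrefix n ⁻¹' {v} = {ω | ∀ i ≤ n, ω i = v (Fin.ofNat (n + 1) i)} := by
    ext ω
    simp only [Set.mem_preimage, Set.mem_singleton_iff, Set.mem_ofPred_eq, funext_iff, pathPrefix]
    refine ⟨fun h i hi => ?_, fun h i => ?_⟩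
    · simpa [Nat.mod_eq_of_lt (Nat.lt_succ_of_le hi)] using h (Fin.ofNat (n + 1) i)
    · simpa using h i (Nat.lt_succ_iff.mp i.isLt)
  have hprod : ENNReal.ofReal
      (∏ i ∈ range n, π (v (Fin.ofNat (n + 1) (i + 1)) - v (Fin.ofNat (n + 1) i))) =
        pathWeight π v := by
    rw [ENNReal.ofReal_prod_of_nonneg fun _ _ => hπ _, pathWeight, ← Fin.prod_univ_eq_prod_range]
    refine Fintype.prod_congr _ _ fun i => ?_
    congr 4 <;> ext <;> simp [Nat.mod_eq_of_lt]
  rw [hset, hQ, hprod]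
  simp

theorem IsWalkLaw.measure_pathPrefix_preimage (hQ : IsWalkLaw π Q) (hπ : ∀ z, 0 ≤ π z)
    (x : ℤ) {n : ℕ} (S : Set (Fin (n + 1) → ℤ)) :
    Q x (pathPrefix n ⁻¹' S) =
      ∑' v, S.indicator (fun v => if v 0 = x then pathWeight π v else 0) v := by
  rw [← Measure.map_apply (measurable_pathPrefix n) S.to_countable.measurableSet,
    ← Measure.tsum_indicator_apply_singleton _ _ S.to_countable.measurableSet]
  refine tsum_congr fun v => congrArg (S.indicator · v) (funext fun w => ?_)
  rw [Measure.map_apply (measurable_pathPrefix n) (measurableSet_singleton w),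
    hQ.measure_pathPrefix_eq hπ]

theorem ENNReal.tsum_eq_tsum_tsum_fin_cons {α : Type*} (n : ℕ) (F : (Fin (n + 1) → α) → ℝ≥0∞) :
    ∑' v, F v = ∑' z, ∑' u : Fin n → α, F (Fin.cons z u) := by
  rw [← (Fin.consEquiv fun _ => α).tsum_eq, ← ENNReal.tsum_prod]
  rfl

-- The Markov property at time `1`, for events determined by finitely many coordinates.
theorem IsWalkLaw.measure_head_mem_shift_mem (hQ : IsWalkLaw π Q) (hπ : ∀ z, 0 ≤ π z)
    (x : ℤ) {n : ℕ} (B : Set ℤ) (S : Set (Fin (n + 1) → ℤ)) :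
    Q x {ω | ω 0 ∈ B ∧ pathPrefix n (fun i => ω (i + 1)) ∈ S} =
      B.indicator (fun x => ∑' z, ENNReal.ofReal (π (z - x)) * Q z (pathPrefix n ⁻¹' S))
        x := by
  have hset : {ω | ω 0 ∈ B ∧ pathPrefix n (fun i => ω (i + 1)) ∈ S}
      = pathPrefix (n + 1) ⁻¹' {v | v 0 ∈ B ∧ Fin.tail v ∈ S} := by
    ext ω; exact Iff.rfl
  rw [hset, hQ.measure_pathPrefix_preimage hπ, ENNReal.tsum_eq_tsum_tsum_fin_cons]
  simp only [hQ.measure_pathPrefix_preimage hπ]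
  by_cases hx : x ∈ B
  · calc ∑' z, ∑' u, {v : Fin (n + 2) → ℤ | v 0 ∈ B ∧ Fin.tail v ∈ S}.indicator
          (fun v => if v 0 = x then pathWeight π v else 0) (Fin.cons z u : Fin (n + 2) → ℤ)
        = ∑' u, S.indicator (fun u => ENNReal.ofReal (π (u 0 - x)) * pathWeight π u) u := by
          rw [tsum_eq_single x fun z hz => by simp [Set.indicator_apply, hz]]
          exact tsum_congr fun u => by simp [Set.indicator_apply, hx, pathWeight_cons]
      _ = ∑' u, ∑' z, S.indicator (fun u => ENNReal.ofReal (π (z - x)) *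
            if u 0 = z then pathWeight π u else 0) u := by
          refine tsum_congr fun u => ?_
          rw [tsum_eq_single (u 0) fun z hz => by simp [Set.indicator_apply, Ne.symm hz]]
          simp [Set.indicator_apply]
      _ = _ := by
          rw [Set.indicator_of_mem hx, ENNReal.tsum_comm]
          refine tsum_congr fun z => ?_
          rw [← ENNReal.tsum_mul_left]
          exact tsum_congr fun u => by simp [Set.indicator_apply]
  · simp only [Set.indicator_of_notMem hx, ENNReal.tsum_eq_zero]
    intro z u
    simp only [Set.indicator_apply, Set.mem_ofPred_eq, Fin.cons_zero]
    grind

def visitAvoiding (A : Set ℤ) (y : ℤ) (n : ℕ) : Set (ℕ → ℤ) :=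
  {ω | (∀ i ≤ n, ω i ∉ A) ∧ ω n = y}

theorem visitAvoiding_eq_preimage (A : Set ℤ) (y : ℤ) (n : ℕ) :
    visitAvoiding A y n = pathPrefix n ⁻¹' {u | (∀ i, u i ∉ A) ∧ u (Fin.last n) = y} := by
  ext ω
  simp only [visitAvoiding, pathPrefix, Set.mem_preimage, Set.mem_ofPred_eq, Fin.val_last]
  exact and_congr_left' ⟨fun h i => h i (Nat.lt_succ_iff.mp i.isLt),
    fun h i hi => h ⟨i, Nat.lt_succ_of_le hi⟩⟩

theorem visitAvoiding_succ (A : Set ℤ) (y : ℤ) (n : ℕ) :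
    visitAvoiding A y (n + 1) = {ω | ω 0 ∈ Aᶜ ∧
      pathPrefix n (fun i => ω (i + 1)) ∈ {u | (∀ i, u i ∉ A) ∧ u (Fin.last n) = y}} := by
  ext ω
  simp only [visitAvoiding, pathPrefix, Set.mem_ofPred_eq, Set.mem_compl_iff, Fin.val_last]
  rw [← and_assoc]
  refine and_congr_left' ⟨fun h => ⟨h 0 (Nat.zero_le _), fun i => h _ (Nat.succ_le_succ
    (Nat.lt_succ_iff.mp i.isLt))⟩, fun ⟨h0, h⟩ i hi => ?_⟩
  rcases i with _ | i
  exacts [h0, h ⟨i, by omega⟩]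

theorem IsWalkLaw.measure_visitAvoiding_zero (hQ : IsWalkLaw π Q) (A : Set ℤ) (x y : ℤ) :
    Q x (visitAvoiding A y 0) = Aᶜ.indicator (fun x => if x = y then 1 else 0) x := by
  by_cases hy : y ∈ A
  · have hempty : visitAvoiding A y 0 = ∅ :=
      Set.eq_empty_of_forall_notMem fun ω ⟨h, h0⟩ => h 0 le_rfl (h0 ▸ hy)
    rw [hempty, measure_empty]
    by_cases hx : x ∈ A
    · simp [hx]
    · simp [hx, show x ≠ y from fun h => hx (h ▸ hy)]
  · have hcyl : visitAvoiding A y 0 = {ω | ∀ i ≤ 0, ω i = (fun _ => y) i} := by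
      ext ω
      simp only [visitAvoiding, Set.mem_ofPred_eq, Nat.le_zero, forall_eq]
      exact ⟨And.right, fun h => ⟨h ▸ hy, h⟩⟩
    rw [hcyl, hQ]
    by_cases hx : x = y
    · subst hx; simp [hy]
    · simp [Ne.symm hx, hx, Set.indicator_apply]

theorem IsWalkLaw.measure_visitAvoiding_succ (hQ : IsWalkLaw π Q) (hπ : ∀ z, 0 ≤ π z)
    (A : Set ℤ) (x y : ℤ) (n : ℕ) :
    Q x (visitAvoiding A y (n + 1)) = Aᶜ.indicator
      (fun x => ∑' z, ENNReal.ofReal (π (z - x)) * Q z (visitAvoiding A y n)) x := by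
  rw [visitAvoiding_succ, hQ.measure_head_mem_shift_mem hπ, visitAvoiding_eq_preimage]

theorem IsPMF.tsum_ofReal_sub (hπ : IsPMF π) (x : ℤ) :
    ∑' z, ENNReal.ofReal (π (z - x)) = 1 := by
  calc ∑' z, ENNReal.ofReal (π (z - x)) = ∑' z, ENNReal.ofReal (π z) :=
        (Equiv.subRight x).tsum_eq fun z => ENNReal.ofReal (π z)
    _ = 1 := by
        rw [← ENNReal.ofReal_tsum_of_nonneg hπ.1 hπ.2.summable, hπ.2.tsum_eq,
          ENNReal.ofReal_one]

noncomputable def greenAvoiding (Q : ℤ → Measure (ℕ → ℤ)) (A : Set ℤ) (y : ℤ) (N : ℕ)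
    (x : ℤ) : ℝ≥0∞ :=
  ∑ n ∈ range N, Q x (visitAvoiding A y n)

section greenAvoiding

variable {A : Set ℤ} {y : ℤ}

theorem greenAvoiding_le_succ (N : ℕ) (x : ℤ) :
    greenAvoiding Q A y N x ≤ greenAvoiding Q A y (N + 1) x := by
  simp [greenAvoiding, sum_range_succ]

theorem IsWalkLaw.greenAvoiding_succ (hQ : IsWalkLaw π Q) (hπ : ∀ z, 0 ≤ π z) (N : ℕ)
    (x : ℤ) :
    greenAvoiding Q A y (N + 1) x = Aᶜ.indicator (fun x => (if x = y then 1 else 0) +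
      ∑' z, ENNReal.ofReal (π (z - x)) * greenAvoiding Q A y N z) x := by
  simp only [greenAvoiding, sum_range_succ', hQ.measure_visitAvoiding_succ hπ,
    hQ.measure_visitAvoiding_zero]
  by_cases hx : x ∈ A
  · simp [hx]
  · simp only [Set.indicator_of_mem (Set.mem_compl hx), mul_sum]
    rw [Summable.tsum_finsetSum fun _ _ => ENNReal.summable, add_comm]

theorem IsWalkLaw.greenAvoiding_of_mem (hQ : IsWalkLaw π Q) (hπ : ∀ z, 0 ≤ π z) {x : ℤ}
    (hx : x ∈ A) (N : ℕ) : greenAvoiding Q A y N x = 0 := by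
  cases N with
  | zero => simp [greenAvoiding]
  | succ N => rw [hQ.greenAvoiding_succ hπ, Set.indicator_of_notMem (by simpa using hx)]

theorem IsWalkLaw.greenAvoiding_le_natCast (hQ : IsWalkLaw π Q) (hπ : IsPMF π) (N : ℕ) (x : ℤ) :
    greenAvoiding Q A y N x ≤ N := by
  induction N generalizing x with
  | zero => simp [greenAvoiding]
  | succ N ih =>
    calc greenAvoiding Q A y (N + 1) x
        ≤ (if x = y then 1 else 0) +
            ∑' z, ENNReal.ofReal (π (z - x)) * greenAvoiding Q A y N z := by
          rw [hQ.greenAvoiding_succ hπ.1]; exact Set.indicator_le_self _ _ x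
      _ ≤ 1 + ∑' z, ENNReal.ofReal (π (z - x)) * N := by
          gcongr with z
          · split_ifs <;> simp
          · exact ih z
      _ = (N + 1 : ℕ) := by
          rw [ENNReal.tsum_mul_right, hπ.tsum_ofReal_sub, one_mul, add_comm, Nat.cast_succ]

theorem IsWalkLaw.greenAvoiding_ne_top (hQ : IsWalkLaw π Q) (hπ : IsPMF π) (N : ℕ) (x : ℤ) :
    greenAvoiding Q A y N x ≠ ⊤ :=
  ne_top_of_le_ne_top (ENNReal.natCast_ne_top N) (hQ.greenAvoiding_le_natCast hπ N x)

theorem IsWalkLaw.greenAvoiding_le_self (hQ : IsWalkLaw π Q) (hπ : IsPMF π) (N : ℕ) (x : ℤ) :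
    greenAvoiding Q A y N x ≤ greenAvoiding Q A y N y := by
  induction N generalizing x with
  | zero => simp [greenAvoiding]
  | succ N ih =>
    by_cases hx : x ∈ A
    · simp [hQ.greenAvoiding_of_mem hπ.1 hx]
    by_cases hxy : x = y
    · rw [hxy]
    calc greenAvoiding Q A y (N + 1) x
        = ∑' z, ENNReal.ofReal (π (z - x)) * greenAvoiding Q A y N z := by
          simp [hQ.greenAvoiding_succ hπ.1, hx, hxy]
      _ ≤ ∑' z, ENNReal.ofReal (π (z - x)) * greenAvoiding Q A y N y := by
          gcongr with z; exact ih z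
      _ = greenAvoiding Q A y N y := by rw [ENNReal.tsum_mul_right, hπ.tsum_ofReal_sub, one_mul]
      _ ≤ greenAvoiding Q A y (N + 1) y := greenAvoiding_le_succ N y

theorem IsWalkLaw.toReal_greenAvoiding_le (hQ : IsWalkLaw π Q) (hπ : IsPMF π) {T : Finset ℤ}
    (hT : ∀ z ∉ T, z ∈ A) (N : ℕ) (z : ℤ) :
    (greenAvoiding Q A y N z).toReal ≤
      (if z = y then 1 else 0) + ∑ w ∈ T, π (w - z) * (greenAvoiding Q A y N w).toReal := by
  have hδ : (0 : ℝ) ≤ if z = y then 1 else 0 := by split_ifs <;> norm_num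
  have hterm : ∀ w, 0 ≤ π (w - z) * (greenAvoiding Q A y N w).toReal :=
    fun w => mul_nonneg (hπ.1 _) ENNReal.toReal_nonneg
  refine ENNReal.toReal_le_of_le_ofReal (add_nonneg hδ (sum_nonneg fun w _ => hterm w)) ?_
  calc greenAvoiding Q A y N z ≤ greenAvoiding Q A y (N + 1) z := greenAvoiding_le_succ N z
    _ ≤ (if z = y then 1 else 0) +
          ∑' w, ENNReal.ofReal (π (w - z)) * greenAvoiding Q A y N w := by
        rw [hQ.greenAvoiding_succ hπ.1]; exact Set.indicator_le_self _ _ z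
    _ = (if z = y then 1 else 0) +
          ∑ w ∈ T, ENNReal.ofReal (π (w - z)) * greenAvoiding Q A y N w := by
        rw [tsum_eq_sum fun w hw => by rw [hQ.greenAvoiding_of_mem hπ.1 (hT w hw), mul_zero]]
    _ = _ := by
        rw [ENNReal.ofReal_add hδ (sum_nonneg fun w _ => hterm w),
          ENNReal.ofReal_sum_of_nonneg fun w _ => hterm w]
        congr 1
        · split_ifs <;> simp
        · refine sum_congr rfl fun w _ => ?_
          rw [ENNReal.ofReal_mul (hπ.1 _), ENNReal.ofReal_toReal (hQ.greenAvoiding_ne_top hπ N w)]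

end greenAvoiding

-- Killing the walk also off `(-M, M)` keeps every sum of the energy argument finite.
def zeroOrOutside (M : ℕ) : Set ℤ := {z | z = 0 ∨ (M : ℤ) ≤ |z|}

theorem IsWalkLaw.greenAvoiding_zeroOrOutside_le (hQ : IsWalkLaw π Q) (hπ : IsPMF π)
    (hπ1 : 0 < π 1) (hπ1' : 0 < π (-1)) (M N : ℕ) (x y : ℤ) :
    greenAvoiding Q (zeroOrOutside M) y N x ≤
      ENNReal.ofReal (2 / min (π 1) (π (-1)) * |(y : ℝ)|) := by
  refine (hQ.greenAvoiding_le_self hπ N x).trans ?_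
  by_cases hy : y ∈ zeroOrOutside M
  · rw [hQ.greenAvoiding_of_mem hπ.1 hy]; exact zero_le
  simp only [zeroOrOutside, Set.mem_ofPred_eq, not_or, not_le] at hy
  obtain ⟨hy0, hyM⟩ := hy
  have hT : ∀ z ∉ Ioo (-(M : ℤ)) M, z ∈ zeroOrOutside M := fun z hz =>
    Or.inr (by rw [mem_Ioo, ← abs_lt] at hz; omega)
  have hchain : ∀ k ≤ y.natAbs, y.sign * k ∈ Ioo (-(M : ℤ)) M := fun k hk => by
    rw [mem_Ioo, ← abs_lt, abs_mul, Int.abs_sign_of_ne_zero hy0, one_mul, Nat.abs_cast]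
    have := Int.natCast_natAbs y
    omega
  have hbound := le_of_poisson_subsolution hπ hy0 (fun _ => ENNReal.toReal_nonneg)
    (by rw [hQ.greenAvoiding_of_mem hπ.1 (Or.inl rfl), ENNReal.toReal_zero]) hchain
    fun z _ => hQ.toReal_greenAvoiding_le hπ hT N z
  rw [← ENNReal.ofReal_toReal (hQ.greenAvoiding_ne_top hπ N y)]
  refine ENNReal.ofReal_le_ofReal ?_
  rw [div_mul_eq_mul_div, le_div_iff₀ (lt_min hπ1 hπ1')]
  linarith

theorem visitAvoiding_anti {A B : Set ℤ} (hAB : A ⊆ B) (y : ℤ) (n : ℕ) :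
    visitAvoiding B y n ⊆ visitAvoiding A y n :=
  fun _ ⟨h, hy⟩ => ⟨fun i hi hA => h i hi (hAB hA), hy⟩

theorem antitone_zeroOrOutside : Antitone zeroOrOutside := fun _ _ hMM' _ hz =>
  hz.imp_right fun h => le_trans (by exact_mod_cast hMM') h

theorem iUnion_visitAvoiding_zeroOrOutside (y : ℤ) (n : ℕ) :
    ⋃ M, visitAvoiding (zeroOrOutside M) y n = visitAvoiding {0} y n := by
  refine subset_antisymm
    (Set.iUnion_subset fun M => visitAvoiding_anti (fun z hz => Or.inl hz) y n)
    fun ω ⟨h, hy⟩ => Set.mem_iUnion.mpr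
      ⟨∑ i ∈ range (n + 1), (ω i).natAbs + 1, fun i hi hz => ?_, hy⟩
  rcases hz with hz | hz
  · exact h i hi hz
  · have hle := single_le_sum (s := range (n + 1)) (fun j _ => Nat.zero_le ((ω j).natAbs))
      (mem_range.mpr (Nat.lt_succ_of_le hi))
    rw [← Int.natCast_natAbs] at hz
    omega

theorem greenAvoiding_singleton_zero_eq_iSup (N : ℕ) (x y : ℤ) :
    greenAvoiding Q {0} y N x = ⨆ M, greenAvoiding Q (zeroOrOutside M) y N x := by
  have hmono : ∀ n, Monotone fun M => visitAvoiding (zeroOrOutside M) y n :=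
    fun n _ _ hMM' => visitAvoiding_anti (antitone_zeroOrOutside hMM') y n
  simp only [greenAvoiding, ← iUnion_visitAvoiding_zeroOrOutside, (hmono _).measure_iUnion]
  exact ENNReal.finsetSum_iSup_of_monotone fun n _ _ hMM' => measure_mono (hmono n hMM')

theorem lt_hitTime_iff (A : Set ℤ) (ω : ℕ → ℤ) (n : ℕ) :
    (n : ℕ∞) < hitTime A ω ↔ ∀ i ≤ n, ω i ∉ A := by
  rw [← ENat.add_one_le_iff (ENat.natCast_ne_top n), hitTime]
  simp only [le_iInf_iff]
  refine forall_congr' fun i => ⟨fun h hi hA => ?_, fun h hA => ?_⟩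
  · have := h hA; norm_cast at this; omega
  · by_contra hlt; push Not at hlt; norm_cast at hlt; exact h (by omega) hA

theorem lintegral_visits_before_hitTime (μ : Measure (ℕ → ℤ)) (A : Set ℤ) (y : ℤ) :
    ∫⁻ ω, (∑' n : ℕ, if (n : ℕ∞) < hitTime A ω ∧ ω n = y then (1 : ℝ≥0∞) else 0) ∂μ =
      ∑' n, μ (visitAvoiding A y n) := by
  have hmeas : ∀ n, MeasurableSet (visitAvoiding A y n) := fun n => by
    rw [visitAvoiding_eq_preimage]
    exact measurable_pathPrefix n (Set.to_countable _).measurableSet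
  have hind : ∀ ω (n : ℕ),
      (if (n : ℕ∞) < hitTime A ω ∧ ω n = y then (1 : ℝ≥0∞) else 0) =
        (visitAvoiding A y n).indicator 1 ω := fun ω n => by
    simp [Set.indicator_apply, visitAvoiding, lt_hitTime_iff]
  simp only [hind]
  rw [lintegral_tsum fun n => (measurable_one.indicator (hmeas n)).aemeasurable]
  exact tsum_congr fun n => lintegral_indicator_one (hmeas n)

theorem stmt4_general
    (π : ℤ → ℝ)
    (hπ : IsPMF π)
    (hsupp : ∀ x, 0 < π x)
    (Q : ℤ → Measure (ℕ → ℤ))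
    (hcyl : ∀ (x : ℤ) (n : ℕ) (a : ℕ → ℤ),
      Q x {ω | ∀ i ≤ n, ω i = a i} =
        if a 0 = x then
          ENNReal.ofReal (∏ i ∈ Finset.range n, π (a (i + 1) - a i))
        else 0) :
    ∃ C : ℝ, 0 < C ∧ ∀ x y : ℤ,
      ∫⁻ ω, (∑' n : ℕ,
          if (n : ℕ∞) < hitTime {0} ω ∧ ω n = y then (1 : ℝ≥0∞) else 0) ∂(Q x) ≤
        ENNReal.ofReal (C * |(y : ℝ)|) := by
  have hmin : 0 < min (π 1) (π (-1)) := lt_min (hsupp 1) (hsupp (-1))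
  refine ⟨2 / min (π 1) (π (-1)), by positivity, fun x y => ?_⟩
  rw [lintegral_visits_before_hitTime]
  refine ENNReal.tsum_le_of_sum_range_le fun N => ?_
  rw [← greenAvoiding, greenAvoiding_singleton_zero_eq_iSup]
  exact iSup_le fun M =>
    IsWalkLaw.greenAvoiding_zeroOrOutside_le hcyl hπ (hsupp 1) (hsupp (-1)) M N x y

/-- There exists `C > 0` such that for all `x, y ∈ ℤ`, the expected number of
visits of the random walk to `y` strictly before the hitting time of `0`
satisfies `𝔼_x(#{n : n < H_0^Y, Y_n = y}) ≤ C·|y|`. -/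
theorem stmt4
    (π : ℤ → ℝ)
    (hπ : IsPMF π)
    (hsymm : ∀ x, π (-x) = π x)
    (hsupp : ∀ x, 0 < π x)
    (htail : ∃ f F : ℝ, 0 < f ∧ 0 < F ∧
      ∀ x, π x ≤ F * Real.exp (-f * |(x : ℝ)|))
    (Q : ℤ → Measure (ℕ → ℤ))
    (hQ : ∀ x, IsProbabilityMeasure (Q x))
    (hcyl : ∀ (x : ℤ) (n : ℕ) (a : ℕ → ℤ),
      Q x {ω | ∀ i ≤ n, ω i = a i} =
        if a 0 = x then
          ENNReal.ofReal (∏ i ∈ Finset.range n, π (a (i + 1) - a i))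
        else 0) :
    ∃ C : ℝ, 0 < C ∧ ∀ x y : ℤ,
      ∫⁻ ω, (∑' n : ℕ,
          if (n : ℕ∞) < hitTime {0} ω ∧ ω n = y then (1 : ℝ≥0∞) else 0) ∂(Q x) ≤
        ENNReal.ofReal (C * |(y : ℝ)|) :=
  stmt4_general π hπ hsupp Q hcyl
end

section
/- For every x ∈ ℤ and every integer k ≥ 0, ℙ_x(λ_k < H_0) ≤ (1 − δ)^{⌊k/2⌋}. -/
open MeasureTheory
open scoped Classical ENNReal

/-- `T' = inf{n ≥ 0 : {X_0, …, X_n} ∩ I ≠ ∅ and {X_0, …, X_n} ∩ Iᶜ ≠ ∅}`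
where `I = [−L, L] ∩ ℤ`, with value `⊤` if no such `n` exists. -/
noncomputable def TprimeTime (L : ℤ) (ω : ℕ → ℤ) : ℕ∞ :=
  ⨅ (n : ℕ) (_ : (∃ i ≤ n, |ω i| ≤ L) ∧ ∃ i ≤ n, L < |ω i|), (n : ℕ∞)

/-- `λ_1 = T' ∧ H_0`. -/
noncomputable def lam1 (L : ℤ) (ω : ℕ → ℤ) : ℕ∞ :=
  min (TprimeTime L ω) (hitTime {0} ω)

/-- The sequence of times `λ_0 = 0`, `λ_{k+1} = λ_k + λ_1 ∘ θ_{λ_k}`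
(in `ℕ∞`, so `λ_{k+1} = ∞` whenever `λ_k = ∞`). -/
noncomputable def lamSeq (L : ℤ) : ℕ → (ℕ → ℤ) → ℕ∞
  | 0, _ => 0
  | k + 1, ω => lamSeq L k ω + lam1 L (fun n => ω ((lamSeq L k ω).toNat + n))


/-!
Let `m` be the first of the two times `λ_k`, `λ_{k+1}` at which the chain is in `I`: if
`X_{λ_k} ∉ I`, the stage ending at `λ_{k+1}` ends by entering `I` or by hitting `0`, so on
`{λ_{k+2} < H_0}` such an `m` exists, `X_m ∈ I \ {0}`, and `H_0 > λ_{k+2} ≥ m + 1`, so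
`X_{m+1} ≠ 0`.
From `z ∈ I \ {0}` the chain jumps to `0` with probability `π_z(-z) ≥ δ`. The Markov property at
each deterministic time `m`, summed over the disjoint events "`m` is this time", gives
`ℙ_x(λ_{k+2} < H_0) ≤ (1 - δ) ℙ_x(λ_k < H_0)`, and the bound follows by induction on `k`.
-/

section StoppingTimes

variable {L : ℤ} {ω ω' : ℕ → ℤ} {m n : ℕ}

lemma hitTime_le_natCast_iff {A : Set ℤ} : hitTime A ω ≤ m ↔ ∃ i ≤ m, ω i ∈ A := by
  refine ⟨fun h => ?_, fun ⟨i, him, hi⟩ => (iInf₂_le i hi).trans (by exact_mod_cast him)⟩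
  by_contra! hc
  have : ((m + 1 : ℕ) : ℕ∞) ≤ hitTime A ω :=
    le_iInf₂ fun i hi => by exact_mod_cast (not_le.1 fun him => hc i him hi)
  exact absurd (this.trans h) (by norm_cast; omega)

lemma TprimeTime_le_natCast_iff :
    TprimeTime L ω ≤ m ↔ (∃ i ≤ m, |ω i| ≤ L) ∧ ∃ i ≤ m, L < |ω i| := by
  refine ⟨fun h => ?_, fun h => iInf₂_le m h⟩
  by_contra hc
  have : ((m + 1 : ℕ) : ℕ∞) ≤ TprimeTime L ω := by
    refine le_iInf₂ fun n ⟨⟨i, hin, hi⟩, ⟨j, hjn, hj⟩⟩ => ?_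
    have : ¬ n ≤ m := fun hnm => hc ⟨⟨i, hin.trans hnm, hi⟩, ⟨j, hjn.trans hnm, hj⟩⟩
    exact_mod_cast (by omega : m + 1 ≤ n)
  exact absurd (this.trans h) (by norm_cast; omega)

lemma lam1_le_natCast_iff : lam1 L ω ≤ m ↔
    ((∃ i ≤ m, |ω i| ≤ L) ∧ ∃ i ≤ m, L < |ω i|) ∨ ∃ i ≤ m, ω i = 0 := by
  simp only [lam1, min_le_iff, TprimeTime_le_natCast_iff, hitTime_le_natCast_iff,
    Set.mem_singleton_iff]

lemma natCast_lt_hitTime_zero_iff : (m : ℕ∞) < hitTime {0} ω ↔ ∀ i ≤ m, ω i ≠ 0 := by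
  rw [← not_le, hitTime_le_natCast_iff]
  simp

lemma lam1_le_natCast_congr (h : ∀ i ≤ m, ω i = ω' i) : lam1 L ω ≤ m ↔ lam1 L ω' ≤ m := by
  have hex : ∀ p : ℤ → Prop, (∃ i ≤ m, p (ω i)) ↔ ∃ i ≤ m, p (ω' i) := fun p =>
    exists_congr fun i => and_congr_right fun hi => by rw [h i hi]
  rw [lam1_le_natCast_iff, lam1_le_natCast_iff, hex (|·| ≤ L), hex (L < |·|), hex (· = 0)]

lemma ENat.eq_of_le_natCast_iff {a b : ℕ∞} (ha : a ≤ n) (h : ∀ k ≤ n, a ≤ k ↔ b ≤ k) :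
    b = a := by
  obtain ⟨t, rfl, htn⟩ := ENat.le_natCast_iff.1 ha
  have hbt : b ≤ t := (h t htn).1 le_rfl
  obtain ⟨s, rfl, hst⟩ := ENat.le_natCast_iff.1 hbt
  exact le_antisymm hbt ((h s (hst.trans htn)).2 le_rfl)

lemma lam1_congr (h : ∀ i ≤ n, ω i = ω' i) (hle : lam1 L ω ≤ n) : lam1 L ω' = lam1 L ω :=
  ENat.eq_of_le_natCast_iff hle fun _ hk =>
    lam1_le_natCast_congr fun i hi => h i (hi.trans hk)

lemma one_le_lam1 (h : ω 0 ≠ 0) : 1 ≤ lam1 L ω := by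
  rw [Order.one_le_iff_ne_zero]
  intro h0
  have := (lam1_le_natCast_iff (L := L) (ω := ω) (m := 0)).1 (by simp [h0])
  simp only [nonpos_iff_eq_zero, exists_eq_left] at this
  omega

lemma abs_le_of_lam1_eq {t : ℕ} (hout : L < |ω 0|) (ht : lam1 L ω = t) (hnz : ω t ≠ 0) :
    |ω t| ≤ L := by
  have hmin : ∀ i < t, ¬ lam1 L ω ≤ i := fun i hi => by rw [ht]; exact_mod_cast hi.not_ge
  rcases lam1_le_natCast_iff.1 ht.le with ⟨⟨i, hit, hi⟩, -⟩ | ⟨i, hit, hi⟩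
  · rcases hit.lt_or_eq with hit | rfl
    · exact absurd (lam1_le_natCast_iff.2 (.inl ⟨⟨i, le_rfl, hi⟩, ⟨0, by omega, hout⟩⟩))
        (hmin i hit)
    · exact hi
  · rcases hit.lt_or_eq with hit | rfl
    · exact absurd (lam1_le_natCast_iff.2 (.inr ⟨i, le_rfl, hi⟩)) (hmin i hit)
    · exact absurd hi hnz

lemma lamSeq_succ_of_eq {k s : ℕ} (hs : lamSeq L k ω = s) :
    lamSeq L (k + 1) ω = s + lam1 L (fun i => ω (s + i)) := by
  simp [lamSeq, hs]

lemma lamSeq_le_lamSeq_succ (k : ℕ) : lamSeq L k ω ≤ lamSeq L (k + 1) ω :=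
  le_self_add

lemma lamSeq_congr (h : ∀ i ≤ n, ω i = ω' i) :
    ∀ {k : ℕ}, lamSeq L k ω ≤ n → lamSeq L k ω' = lamSeq L k ω
  | 0, _ => rfl
  | k + 1, hle => by
    obtain ⟨s, hs, -⟩ := ENat.le_natCast_iff.1 ((lamSeq_le_lamSeq_succ k).trans hle)
    have hs' : lamSeq L k ω' = s :=
      (lamSeq_congr h (hs ▸ (lamSeq_le_lamSeq_succ k).trans hle)).trans hs
    rw [lamSeq_succ_of_eq hs] at hle ⊢
    rw [lamSeq_succ_of_eq hs']
    obtain ⟨t, ht⟩ := ENat.ne_top_iff_exists.1 fun htop : lam1 L (fun i => ω (s + i)) = ⊤ => by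
      simp [htop] at hle
    rw [← ht] at hle
    have hstn : s + t ≤ n := by exact_mod_cast hle
    rw [lam1_congr (n := t) (fun i hi => h (s + i) (by omega)) ht.ge]

lemma monotone_lamSeq : Monotone fun k => lamSeq L k ω :=
  monotone_nat_of_le_succ lamSeq_le_lamSeq_succ

end StoppingTimes

/-- `m` is the first of the times `λ_k`, `λ_{k+1}` at which the chain is in `I`, and it has not
visited `0` up to time `m`. -/
def stageInI (L : ℤ) (k m : ℕ) : Set (ℕ → ℤ) :=
  {ω | (∀ i ≤ m, ω i ≠ 0) ∧ |ω m| ≤ L ∧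
    (lamSeq L k ω = m ∨ (lamSeq L (k + 1) ω = m ∧ L < |ω (lamSeq L k ω).toNat|))}

def IsDeterminedUpTo (m : ℕ) (S : Set (ℕ → ℤ)) : Prop :=
  ∀ ⦃ω ω' : ℕ → ℤ⦄, (∀ i ≤ m, ω i = ω' i) → ω ∈ S → ω' ∈ S

section Stages

variable {L : ℤ} {k m : ℕ}

lemma isDeterminedUpTo_stageInI : IsDeterminedUpTo m (stageInI L k m) := by
  rintro ω ω' h ⟨hnz, hI, hstage⟩
  refine ⟨fun i hi => h i hi ▸ hnz i hi, h m le_rfl ▸ hI, ?_⟩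
  rcases hstage with hk | ⟨hk1, hout⟩
  · exact .inl ((lamSeq_congr h hk.le).trans hk)
  · obtain ⟨s, hs, hsm⟩ := ENat.le_natCast_iff.1 ((lamSeq_le_lamSeq_succ k).trans hk1.le)
    refine .inr ⟨(lamSeq_congr h hk1.le).trans hk1, ?_⟩
    rw [lamSeq_congr h (hs ▸ Nat.cast_le.2 hsm), hs, ENat.toNat_natCast, ← h s hsm]
    simpa [hs] using hout

lemma pairwise_disjoint_stageInI : Pairwise (Function.onFun Disjoint (stageInI L k)) := by
  intro m m' hmm'
  refine Set.disjoint_left.2 fun ω ⟨_, hI, hstage⟩ ⟨_, hI', hstage'⟩ => ?_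
  rcases hstage with hk | ⟨hk1, hout⟩ <;> rcases hstage' with hk' | ⟨hk1', hout'⟩
  · exact hmm' (by exact_mod_cast hk.symm.trans hk')
  · rw [hk, ENat.toNat_natCast] at hout'; omega
  · rw [hk', ENat.toNat_natCast] at hout; omega
  · exact hmm' (by exact_mod_cast hk1.symm.trans hk1')

lemma stageInI_subset : stageInI L k m ⊆ {ω | lamSeq L k ω < hitTime {0} ω} := by
  rintro ω ⟨hnz, -, hstage⟩
  have hk : lamSeq L k ω ≤ m := by
    rcases hstage with hk | ⟨hk1, -⟩
    · exact hk.le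
    · exact (lamSeq_le_lamSeq_succ k).trans hk1.le
  exact hk.trans_lt (natCast_lt_hitTime_zero_iff.2 hnz)

lemma lamSeq_add_two_lt_hitTime_subset :
    {ω | lamSeq L (k + 2) ω < hitTime {0} ω} ⊆ ⋃ m, stageInI L k m ∩ {ω | ω (m + 1) ≠ 0} := by
  intro ω (hω : lamSeq L (k + 2) ω < hitTime {0} ω)
  have hfin : ∀ j ≤ k + 2, lamSeq L j ω ≠ ⊤ := fun j hj =>
    ne_top_of_le_ne_top hω.ne_top (monotone_lamSeq hj)
  obtain ⟨n, hn⟩ := ENat.ne_top_iff_exists.1 (hfin k (by omega))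
  obtain ⟨p, hp⟩ := ENat.ne_top_iff_exists.1 (hfin (k + 1) (by omega))
  have hp1 : lamSeq L (k + 1) ω = n + lam1 L (fun i => ω (n + i)) := lamSeq_succ_of_eq hn.symm
  have hnz_p : ∀ i ≤ p, ω i ≠ 0 :=
    natCast_lt_hitTime_zero_iff.1 (hp ▸ (lamSeq_le_lamSeq_succ (k + 1)).trans_lt hω)
  have hnz : ∀ i ≤ p + 1, ω i ≠ 0 := by
    refine natCast_lt_hitTime_zero_iff.1 (lt_of_le_of_lt ?_ hω)
    rw [lamSeq_succ_of_eq hp.symm, Nat.cast_add, Nat.cast_one]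
    exact add_le_add le_rfl (one_le_lam1 (ω := fun i => ω (p + i)) (by simpa using hnz_p p le_rfl))
  have hnp : n ≤ p := by exact_mod_cast hn ▸ hp ▸ lamSeq_le_lamSeq_succ k
  rcases le_or_gt |ω n| L with hin | hout
  · exact Set.mem_iUnion.2 ⟨n, ⟨fun i hi => hnz i (by omega), hin, .inl hn.symm⟩, hnz _ (by omega)⟩
  · obtain ⟨t, ht⟩ := ENat.ne_top_iff_exists.1 fun htop : lam1 L (fun i => ω (n + i)) = ⊤ =>
      hfin (k + 1) (by omega) (by rw [hp1, htop, add_top])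
    have hpnt : (p : ℕ∞) = (n + t : ℕ) := by rw [hp, hp1, ← ht, Nat.cast_add]
    replace hpnt : p = n + t := by exact_mod_cast hpnt
    subst hpnt
    have hI : |ω (n + t)| ≤ L :=
      abs_le_of_lam1_eq (ω := fun i => ω (n + i)) (by simpa using hout) ht.symm (hnz_p _ le_rfl)
    refine Set.mem_iUnion.2 ⟨n + t, ⟨hnz_p, hI, .inr ⟨hp.symm, ?_⟩⟩, hnz _ le_rfl⟩
    rwa [← hn, ENat.toNat_natCast]

end Stages

def IsChainLaw (πz : ℤ → ℤ → ℝ) (P : ℤ → Measure (ℕ → ℤ)) : Prop :=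
  ∀ (x : ℤ) (n : ℕ) (a : ℕ → ℤ), P x {ω | ∀ i ≤ n, ω i = a i} =
    if a 0 = x then ENNReal.ofReal (∏ i ∈ Finset.range n, πz (a i) (a (i + 1) - a i)) else 0

def pathUpTo (m : ℕ) (ω : ℕ → ℤ) : Fin (m + 1) → ℤ := fun i => ω i

section Paths

variable {m : ℕ}

lemma measurable_pathUpTo : Measurable (pathUpTo m) :=
  measurable_pi_lambda _ fun _ => measurable_pi_apply _

lemma pathUpTo_preimage_singleton {a : Fin (m + 1) → ℤ} {e : ℕ → ℤ}
    (he : ∀ i : Fin (m + 1), e i = a i) :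
    pathUpTo m ⁻¹' {a} = {ω | ∀ i ≤ m, ω i = e i} := by
  ext ω
  simp only [Set.mem_preimage, Set.mem_singleton_iff, Set.mem_ofPred_eq, funext_iff, pathUpTo,
    ← he, Fin.forall_iff, Nat.lt_succ_iff]

lemma IsDeterminedUpTo.eq_preimage {S : Set (ℕ → ℤ)} (hS : IsDeterminedUpTo m S) :
    S = pathUpTo m ⁻¹' (pathUpTo m '' S) := by
  refine (Set.subset_preimage_image _ _).antisymm ?_
  rintro ω' ⟨ω, hω, hωω'⟩
  exact hS (fun i hi => congrFun hωω' ⟨i, Nat.lt_succ_of_le hi⟩) hω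

lemma IsDeterminedUpTo.measurableSet {S : Set (ℕ → ℤ)} (hS : IsDeterminedUpTo m S) :
    MeasurableSet S :=
  hS.eq_preimage ▸ measurable_pathUpTo (Set.to_countable _).measurableSet

lemma measure_pathUpTo_preimage (μ : Measure (ℕ → ℤ)) (T : Set (Fin (m + 1) → ℤ)) :
    μ (pathUpTo m ⁻¹' T) = ∑' a, T.indicator (fun a => μ (pathUpTo m ⁻¹' {a})) a := by
  rw [← Measure.map_apply measurable_pathUpTo (Set.to_countable T).measurableSet,
    ← Measure.tsum_indicator_apply_singleton _ _ (Set.to_countable T).measurableSet]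
  simp_rw [Measure.map_apply measurable_pathUpTo (measurableSet_singleton _)]

variable {πz : ℤ → ℤ → ℝ} {P : ℤ → Measure (ℕ → ℤ)}

lemma IsChainLaw.measure_pathUpTo_preimage_snoc (hlaw : IsChainLaw πz P)
    (hπz : ∀ z y, 0 ≤ πz z y) (x : ℤ) (a : Fin (m + 1) → ℤ) (y : ℤ) :
    P x (pathUpTo (m + 1) ⁻¹' {Fin.snoc a y}) =
      P x (pathUpTo m ⁻¹' {a}) * ENNReal.ofReal (πz (a (Fin.last m)) (y - a (Fin.last m))) := by
  set e : ℕ → ℤ := Function.extend Fin.val (Fin.snoc a y : Fin (m + 2) → ℤ) 0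
  have he : ∀ i : Fin (m + 2), e i = (Fin.snoc a y : Fin (m + 2) → ℤ) i :=
    Fin.val_injective.extend_apply (Fin.snoc a y : Fin (m + 2) → ℤ) 0
  have he' : ∀ i : Fin (m + 1), e i = a i := fun i => by simpa using he i.castSucc
  rw [pathUpTo_preimage_singleton he, pathUpTo_preimage_singleton he', hlaw, hlaw,
    Finset.prod_range_succ]
  have hlast : e m = a (Fin.last m) := he' (Fin.last m)
  have hnext : e (m + 1) = y := by simpa using he (Fin.last (m + 1))
  split_ifs
  · rw [hlast, hnext, ENNReal.ofReal_mul (Finset.prod_nonneg fun _ _ => hπz _ _)]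
  · rw [zero_mul]

lemma IsChainLaw.measure_inter_le (hlaw : IsChainLaw πz P) (hπz : ∀ z y, 0 ≤ πz z y)
    (x : ℤ) {S : Set (ℕ → ℤ)} (hS : IsDeterminedUpTo m S) {B : Set ℤ} {c : ℝ≥0∞}
    (hB : ∀ ω ∈ S, ∑' y, B.indicator (fun y => ENNReal.ofReal (πz (ω m) (y - ω m))) y ≤ c) :
    P x (S ∩ {ω | ω (m + 1) ∈ B}) ≤ c * P x S := by
  set T := pathUpTo m '' S
  have hST : S ∩ {ω | ω (m + 1) ∈ B} =
      pathUpTo (m + 1) ⁻¹' {a | Fin.init a ∈ T ∧ a (Fin.last (m + 1)) ∈ B} := by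
    conv_lhs => rw [hS.eq_preimage]
    rfl
  rw [hST, measure_pathUpTo_preimage, ← (Fin.snocEquiv fun _ => ℤ).tsum_eq, ENNReal.tsum_prod',
    ENNReal.tsum_comm, hS.eq_preimage, measure_pathUpTo_preimage, ← ENNReal.tsum_mul_left]
  refine ENNReal.tsum_le_tsum fun a => ?_
  by_cases ha : a ∈ T
  · obtain ⟨ω, hω, rfl⟩ := ha
    have hT : pathUpTo m ω ∈ T := Set.mem_image_of_mem _ hω
    calc _ = ∑' y, P x (pathUpTo m ⁻¹' {pathUpTo m ω}) *
          B.indicator (fun y => ENNReal.ofReal (πz (ω m) (y - ω m))) y := by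
          refine tsum_congr fun y => ?_
          simp only [Fin.snocEquiv, Equiv.coe_fn_mk, Set.indicator_apply, Set.mem_ofPred_eq,
            Fin.init_snoc, Fin.snoc_last, hT, true_and]
          split_ifs
          · rw [hlaw.measure_pathUpTo_preimage_snoc hπz]
            rfl
          · rw [mul_zero]
      _ ≤ c * _ := by
          rw [ENNReal.tsum_mul_left, mul_comm, Set.indicator_of_mem hT]
          exact mul_le_mul_left (hB ω hω) _
  · refine le_of_eq_of_le (ENNReal.tsum_eq_zero.2 fun y => ?_) zero_le
    simp [Fin.snocEquiv, ha]

end Paths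

lemma tsum_indicator_ne_zero_ofReal {p : ℤ → ℝ} (hp0 : ∀ y, 0 ≤ p y) (hp : HasSum p 1) (z : ℤ) :
    ∑' y, ({0}ᶜ : Set ℤ).indicator (fun y => ENNReal.ofReal (p (y - z))) y =
      ENNReal.ofReal (1 - p (-z)) := by
  have hshift : HasSum (fun y => p (y - z)) 1 := (Equiv.subRight z).hasSum_iff.2 hp
  have hoff : HasSum (({0}ᶜ : Set ℤ).indicator fun y => p (y - z)) (1 - p (-z)) := by
    have hind : ({0}ᶜ : Set ℤ).indicator (fun y => p (y - z)) =
        fun y => if y = 0 then 0 else p (y - z) := by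
      ext y
      by_cases hy : y = 0 <;> simp [hy]
    simpa [hind] using hasSum_ite_sub_hasSum hshift 0
  rw [← hoff.tsum_eq, ENNReal.ofReal_tsum_of_nonneg (fun y => Set.indicator_nonneg
    (fun y _ => hp0 _) y) hoff.summable]
  exact congrArg tsum (Set.indicator_comp_of_zero ENNReal.ofReal_zero)

lemma le_pow_div_two_of_le_mul {u : ℕ → ℝ≥0∞} {r : ℝ≥0∞} (hu : ∀ k, u k ≤ 1)
    (hstep : ∀ k, u (k + 2) ≤ r * u k) : ∀ k, u k ≤ r ^ (k / 2)
  | 0 => by simpa using hu 0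
  | 1 => by simpa using hu 1
  | k + 2 => by
    rw [show (k + 2) / 2 = k / 2 + 1 by omega, pow_succ']
    exact (hstep k).trans (mul_le_mul_right (le_pow_div_two_of_le_mul hu hstep k) _)

lemma IsChainLaw.measure_lamSeq_add_two_lt_hitTime_le {πz : ℤ → ℤ → ℝ}
    {P : ℤ → Measure (ℕ → ℤ)} (hlaw : IsChainLaw πz P) (hπz : ∀ z, IsPMF (πz z)) {L : ℤ} {δ : ℝ}
    (hδ : ∀ z : ℤ, |z| ≤ L → z ≠ 0 → δ ≤ πz z (-z)) (x : ℤ) (k : ℕ) :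
    P x {ω | lamSeq L (k + 2) ω < hitTime {0} ω} ≤
      ENNReal.ofReal (1 - δ) * P x {ω | lamSeq L k ω < hitTime {0} ω} := by
  have hπz0 : ∀ z y, 0 ≤ πz z y := fun z => (hπz z).1
  have hstep : ∀ m, P x (stageInI L k m ∩ {ω | ω (m + 1) ∈ ({0}ᶜ : Set ℤ)}) ≤
      ENNReal.ofReal (1 - δ) * P x (stageInI L k m) := fun m =>
    hlaw.measure_inter_le hπz0 x isDeterminedUpTo_stageInI fun ω ⟨hnz, hI, _⟩ => by
      rw [tsum_indicator_ne_zero_ofReal (hπz0 _) (hπz _).2]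
      exact ENNReal.ofReal_le_ofReal (by linarith [hδ _ hI (hnz m le_rfl)])
  calc P x {ω | lamSeq L (k + 2) ω < hitTime {0} ω}
      ≤ ∑' m, P x (stageInI L k m ∩ {ω | ω (m + 1) ∈ ({0}ᶜ : Set ℤ)}) :=
        (measure_mono lamSeq_add_two_lt_hitTime_subset).trans (measure_iUnion_le _)
    _ ≤ ∑' m, ENNReal.ofReal (1 - δ) * P x (stageInI L k m) := ENNReal.tsum_le_tsum hstep
    _ = ENNReal.ofReal (1 - δ) * P x (⋃ m, stageInI L k m) := by
        rw [ENNReal.tsum_mul_left, measure_iUnion pairwise_disjoint_stageInI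
          fun _ => isDeterminedUpTo_stageInI.measurableSet]
    _ ≤ ENNReal.ofReal (1 - δ) * P x {ω | lamSeq L k ω < hitTime {0} ω} :=
        mul_le_mul_right (measure_mono (Set.iUnion_subset fun _ => stageInI_subset)) _

theorem stmt12_general
    (πz : ℤ → ℤ → ℝ)
    (hπz : ∀ z, IsPMF (πz z))
    (L : ℤ)
    (P : ℤ → Measure (ℕ → ℤ))
    (hP : ∀ x, IsProbabilityMeasure (P x))
    (hcyl : ∀ (x : ℤ) (n : ℕ) (a : ℕ → ℤ),
      P x {ω | ∀ i ≤ n, ω i = a i} =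
        if a 0 = x then
          ENNReal.ofReal (∏ i ∈ Finset.range n, πz (a i) (a (i + 1) - a i))
        else 0) :
    ∀ (x : ℤ) (k : ℕ),
      P x {ω | lamSeq L k ω < hitTime {0} ω} ≤
        ENNReal.ofReal
          ((1 - sInf {r : ℝ | ∃ z : ℤ, |z| ≤ L ∧ z ≠ 0 ∧ r = πz z (-z)}) ^ (k / 2)) := by
  intro x k
  set D := {r : ℝ | ∃ z : ℤ, |z| ≤ L ∧ z ≠ 0 ∧ r = πz z (-z)}
  have hD : ∀ r ∈ D, 0 ≤ r ∧ r ≤ 1 := by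
    rintro r ⟨z, -, -, rfl⟩
    exact ⟨(hπz z).1 _, le_hasSum (hπz z).2 _ fun y _ => (hπz z).1 y⟩
  have hδ : ∀ z : ℤ, |z| ≤ L → z ≠ 0 → sInf D ≤ πz z (-z) := fun z hz hz0 =>
    csInf_le ⟨0, fun r hr => (hD r hr).1⟩ ⟨z, hz, hz0, rfl⟩
  have hδ1 : sInf D ≤ 1 := by
    rcases D.eq_empty_or_nonempty with hE | ⟨r, hr⟩
    · simp [hE]
    · exact (csInf_le ⟨0, fun r hr => (hD r hr).1⟩ hr).trans (hD r hr).2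
  rw [ENNReal.ofReal_pow (by linarith)]
  exact le_pow_div_two_of_le_mul (fun _ => prob_le_one)
    (IsChainLaw.measure_lamSeq_add_two_lt_hitTime_le hcyl hπz hδ x) k

/-- With `δ = min{π_x(−x) : x ∈ I, x ≠ 0} > 0`, for every `x ∈ ℤ` and every
integer `k ≥ 0`, `ℙ_x(λ_k < H_0) ≤ (1 − δ)^⌊k/2⌋`, for the Markov chain on `ℤ`
with transitions `P(z, w) = π_z(w − z)`. -/
theorem stmt12
    (π : ℤ → ℝ) (πz : ℤ → ℤ → ℝ)
    (hπ : IsPMF π) (hπz : ∀ z, IsPMF (πz z))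
    (hsymm : ∀ x, π (-x) = π x)
    (hsupp : (∀ x, 0 < π x) ∧ ∀ z, z ≠ 0 → ∀ x, 0 < πz z x)
    (htail : ∃ f F : ℝ, 0 < f ∧ 0 < F ∧
      (∀ x, π x ≤ F * Real.exp (-f * |(x : ℝ)|)) ∧
      (∀ z x, πz z x ≤ F * Real.exp (-f * |(x : ℝ)|)))
    (htv : ∃ g G : ℝ, 0 < g ∧ 0 < G ∧
      ∀ z, (1 / 2) * ∑' x, |πz z x - π x| ≤ G * Real.exp (-g * |(z : ℝ)|))
    (L : ℤ) (hL : 0 < L)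
    (P : ℤ → Measure (ℕ → ℤ))
    (hP : ∀ x, IsProbabilityMeasure (P x))
    (hcyl : ∀ (x : ℤ) (n : ℕ) (a : ℕ → ℤ),
      P x {ω | ∀ i ≤ n, ω i = a i} =
        if a 0 = x then
          ENNReal.ofReal (∏ i ∈ Finset.range n, πz (a i) (a (i + 1) - a i))
        else 0) :
    ∀ (x : ℤ) (k : ℕ),
      P x {ω | lamSeq L k ω < hitTime {0} ω} ≤
        ENNReal.ofReal
          ((1 - sInf {r : ℝ | ∃ z : ℤ, |z| ≤ L ∧ z ≠ 0 ∧ r = πz z (-z)}) ^ (k / 2)) :=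
  stmt12_general πz hπz L P hP hcyl
end
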